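/- arXiv:2604.07056 — 3 statements merged into one kernel-verified Lean document; each statement's English description precedes it below -/
import Mathlib

section
/- Let V be the simple sl₂(𝕂)-module of highest weight p ≥ 0, with basis v_p, v_{p−2}, …, v_{−p} satisfying h·v_{p−2i} = (p−2i)v_{p−2i}, f·v_{p−2i} = v_{p−2i−2} for i < p, and f·v_{−p} = 0. Let U ⊆ V be an h-stable subspace of dimension k, written U = ⟨v_{n_0}⟩ ⊕ … ⊕ ⟨v_{n_{k−1}}⟩ with n_0 < … < n_{k−1}. Then the limit as t → ∞ of exp(tf)·U in the Grassmannian of k-dimensional subspaces of V exists and equals ⟨v_{−p}⟩ ⊕ ⟨v_{−p+2}⟩ ⊕ … ⊕ ⟨v_{−p+2k−2}⟩. -/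
/-!
Put `b s = v_{-p+2s}` and `y j = p - idx j`, so that `f` maps `b (s+1)` to `b s` and `b 0` to
zero. Then `exp(tf) (b y) = ∑_{s ≤ y} t^(y-s)/(y-s)! • b s`, and by multilinearity
`∧_j exp(tf) (b (y j)) = ∑_g t^(∑_j (y j - g j)) (∏_j 1/(y j - g j)!) • ∧_j b (g j)`.
Only injective `g` contribute, and those satisfy `∑ g ≥ 0 + 1 + ⋯ + (k-1)`, with equality
exactly when `g` is a permutation of `{0, …, k-1}`. So the top coefficient is
`det (1/(y j - i)!)_{i,j} • b 0 ∧ ⋯ ∧ b (k-1)`, and up to the factors `1/(y j)!` this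
determinant is the Vandermonde determinant of the distinct numbers `y j`.
-/

open Finset Function
open scoped Nat

namespace Finset

theorem card_le_of_forall_lt {s : Finset ℕ} {a : ℕ} (h : ∀ x ∈ s, x < a) : #s ≤ a := by
  simpa using card_le_card (show s ⊆ range a from fun x hx => mem_range.2 (h x hx))

theorem sum_range_card_le_sum (s : Finset ℕ) : ∑ i ∈ range #s, i ≤ ∑ x ∈ s, x := by
  induction s using Finset.induction_on_max with
  | empty => simp
  | insert a s ha ih =>
    have has : a ∉ s := fun h => lt_irrefl a (ha a h)
    have := card_le_of_forall_lt ha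
    rw [card_insert_of_notMem has, sum_range_succ, sum_insert has]
    omega

theorem eq_range_card_of_sum_le {s : Finset ℕ} (h : ∑ x ∈ s, x ≤ ∑ i ∈ range #s, i) :
    s = range #s := by
  induction s using Finset.induction_on_max with
  | empty => simp
  | insert a s ha ih =>
    have has : a ∉ s := fun h => lt_irrefl a (ha a h)
    have := card_le_of_forall_lt ha
    have := sum_range_card_le_sum s
    rw [card_insert_of_notMem has, sum_range_succ, sum_insert has] at h
    rw [card_insert_of_notMem has, range_add_one, ih (by omega), card_range, show a = #s by omega]

theorem sum_pow_smul_eq_sum_range {ι R E : Type*} [Monoid R] [AddCommMonoid E]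
    [DistribMulAction R E] (s : Finset ι) (e : ι → ℕ) (x : ι → E) {d : ℕ}
    (h : ∀ i ∈ s, d < e i → x i = 0) (t : R) :
    ∑ i ∈ s, t ^ e i • x i = ∑ m ∈ range (d + 1), t ^ m • ∑ i ∈ s with e i = m, x i := by
  calc ∑ i ∈ s, t ^ e i • x i
      = ∑ i ∈ s with e i ∈ range (d + 1), t ^ e i • x i := by
        refine (sum_filter_of_ne fun i hi hne => mem_range.2 ?_).symm
        by_contra hlt
        exact hne (by rw [h i hi (by omega), smul_zero])
    _ = ∑ m ∈ range (d + 1), ∑ i ∈ s with e i = m, t ^ e i • x i :=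
        (sum_fiberwise_eq_sum_filter _ _ _ _).symm
    _ = _ := sum_congr rfl fun m _ => by
        rw [smul_sum]
        exact sum_congr rfl fun i hi => by rw [(mem_filter.1 hi).2]

end Finset

section InjectiveSum

variable {k : ℕ} {g : Fin k → ℕ}

theorem sum_val_le_sum_of_injective (hg : Injective g) : ∑ j : Fin k, (j : ℕ) ≤ ∑ j, g j := by
  have := (univ.image g).sum_range_card_le_sum
  rwa [card_image_of_injective _ hg, card_univ, Fintype.card_fin, sum_image hg.injOn,
    ← Fin.sum_univ_eq_sum_range] at this

theorem exists_perm_of_sum_le (hg : Injective g) (h : ∑ j, g j ≤ ∑ j : Fin k, (j : ℕ)) :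
    ∃ σ : Equiv.Perm (Fin k), (fun j => (σ j : ℕ)) = g := by
  have himage : univ.image g = range k := by
    have := eq_range_card_of_sum_le (s := univ.image g)
    rw [card_image_of_injective _ hg, card_univ, Fintype.card_fin, sum_image hg.injOn,
      ← Fin.sum_univ_eq_sum_range] at this
    exact this h
  have hlt (j : Fin k) : g j < k := mem_range.1 (himage ▸ mem_image_of_mem g (mem_univ j))
  have hinj : Injective fun j => (⟨g j, hlt j⟩ : Fin k) := fun a b hab => hg (Fin.mk.inj hab)
  exact ⟨Equiv.ofBijective _ (Finite.injective_iff_bijective.1 hinj), rfl⟩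

end InjectiveSum

theorem pow_apply_of_chain {R M : Type*} [Semiring R] [AddCommMonoid M] [Module R M]
    {f : Module.End R M} {b : ℕ → M} {y : ℕ} (hb0 : f (b 0) = 0)
    (hb : ∀ s < y, f (b (s + 1)) = b s) (m : ℕ) :
    (f ^ m) (b y) = if m ≤ y then b (y - m) else 0 := by
  induction m with
  | zero => simp
  | succ m ih =>
    rw [pow_succ', Module.End.mul_apply, ih]
    split_ifs with h₁ h₂ h₂
    · rw [show y - m = y - (m + 1) + 1 by omega, hb _ (by omega)]
    · rw [show y - m = 0 by omega, hb0]
    · omega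
    · exact map_zero f

section ExpCoeff

variable (𝕂 : Type*) [Field 𝕂]

/-- Equal to `1 / (y - s)!` for `s ≤ y`; this form also vanishes for `s > y`, and it turns
`expCoeffMatrix` into a Vandermonde matrix with rescaled columns. -/
def expCoeff (y s : ℕ) : 𝕂 := (y.descFactorial s : 𝕂) / y !

variable {𝕂}

theorem expCoeff_eq_zero {y s : ℕ} (h : y < s) : expCoeff 𝕂 y s = 0 := by
  rw [expCoeff, Nat.descFactorial_eq_zero_iff_lt.2 h, Nat.cast_zero, zero_div]

theorem expCoeff_eq_inv_factorial [CharZero 𝕂] {y s : ℕ} (h : s ≤ y) :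
    expCoeff 𝕂 y s = ((y - s)! : 𝕂)⁻¹ := by
  rw [expCoeff, ← Nat.factorial_mul_descFactorial h, Nat.cast_mul,
    div_mul_cancel_right₀ (Nat.cast_ne_zero.2 (Nat.descFactorial_pos.2 h).ne')]

theorem sum_pow_div_factorial_smul_pow_apply_of_chain [CharZero 𝕂] {M : Type*} [AddCommGroup M]
    [Module 𝕂 M] {f : Module.End 𝕂 M} {b : ℕ → M} {y N : ℕ} (hyN : y < N)
    (hb0 : f (b 0) = 0) (hb : ∀ s < y, f (b (s + 1)) = b s) (t : 𝕂) :
    ∑ m ∈ range N, (t ^ m / m ! : 𝕂) • (f ^ m) (b y) =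
      ∑ s ∈ range (y + 1), (t ^ (y - s) * expCoeff 𝕂 y s) • b s := by
  simp only [pow_apply_of_chain hb0 hb]
  rw [← sum_subset (range_subset_range.2 hyN) fun m _ hm => by
    rw [if_neg (by simpa using hm), smul_zero], ← sum_range_reflect]
  refine sum_congr rfl fun s hs => ?_
  have hs : s ≤ y := Nat.lt_succ_iff.1 (mem_range.1 hs)
  rw [if_pos (by omega), show y - (y + 1 - 1 - s) = s by omega, show y + 1 - 1 - s = y - s by omega,
    expCoeff_eq_inv_factorial hs, div_eq_mul_inv]

section Wedge

open ExteriorAlgebra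

variable {M : Type*} [AddCommGroup M] [Module 𝕂 M] {k : ℕ}

variable (𝕂) in
def expCoeffMatrix (y : Fin k → ℕ) : Matrix (Fin k) (Fin k) 𝕂 :=
  Matrix.of fun i j => expCoeff 𝕂 (y j) i

theorem det_expCoeffMatrix_ne_zero [CharZero 𝕂] {y : Fin k → ℕ} (hy : Injective y) :
    (expCoeffMatrix 𝕂 y).det ≠ 0 := by
  have hfactor : expCoeffMatrix 𝕂 y =
      (Matrix.of fun i j : Fin k => (descPochhammer 𝕂 j).eval (y i : 𝕂)).transpose *
        Matrix.diagonal fun j => ((y j)! : 𝕂)⁻¹ := by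
    ext i j
    rw [Matrix.mul_diagonal, Matrix.transpose_apply, Matrix.of_apply,
      descPochhammer_eval_eq_descFactorial, expCoeffMatrix, Matrix.of_apply, expCoeff,
      div_eq_mul_inv]
  rw [hfactor, Matrix.det_mul, Matrix.det_transpose, Matrix.det_diagonal,
    ← Matrix.det_eval_matrixOfPolynomials_eq_det_vandermonde _ _
      (fun i => descPochhammer_natDegree 𝕂 i) (fun i => monic_descPochhammer 𝕂 i)]
  refine mul_ne_zero ?_ (prod_ne_zero_iff.2 fun j _ =>
    inv_ne_zero (mod_cast (y j).factorial_ne_zero))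
  exact Matrix.det_vandermonde_ne_zero_iff.2 fun a b h => hy (Nat.cast_injective h)

variable (b : ℕ → M) (y : Fin k → ℕ)

theorem ιMulti_sum_smul_eq_sum_piFinset (c : ℕ → ℕ → 𝕂) (t : 𝕂) :
    ιMulti 𝕂 k (fun j => ∑ s ∈ range (y j + 1), (t ^ (y j - s) * c (y j) s) • b s) =
      ∑ g ∈ Fintype.piFinset fun j => range (y j + 1), t ^ (∑ j, (y j - g j)) •
        ((∏ j, c (y j) (g j)) • ιMulti 𝕂 k (fun j => b (g j))) := by
  rw [← AlternatingMap.coe_multilinearMap, MultilinearMap.map_sum_finset]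
  refine sum_congr rfl fun g _ => ?_
  rw [MultilinearMap.map_smul_univ, AlternatingMap.coe_multilinearMap, smul_smul,
    prod_mul_distrib, prod_pow_eq_pow_sum]

theorem le_and_injective_of_smul_ιMulti_ne_zero {g : Fin k → ℕ}
    (h : (∏ j, expCoeff 𝕂 (y j) (g j)) • ιMulti 𝕂 k (fun j => b (g j)) ≠ 0) :
    (∀ j, g j ≤ y j) ∧ Injective g := by
  refine ⟨fun j => ?_, fun i j hij => ?_⟩
  · by_contra! hlt
    exact h (by rw [prod_eq_zero (mem_univ j) (expCoeff_eq_zero hlt), zero_smul])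
  · by_contra hne
    exact h (by
      rw [AlternatingMap.map_eq_zero_of_eq _ (fun j => b (g j)) (congrArg b hij) hne, smul_zero])

variable (𝕂) in
theorem exists_ιMulti_sum_smul_eq_sum_range_pow_smul :
    ∃ a : ℕ → ExteriorAlgebra 𝕂 M,
      (∀ t : 𝕂, ιMulti 𝕂 k (fun j =>
          ∑ s ∈ range (y j + 1), (t ^ (y j - s) * expCoeff 𝕂 (y j) s) • b s) =
        ∑ m ∈ range (∑ j, y j - ∑ j : Fin k, (j : ℕ) + 1), t ^ m • a m) ∧
      a (∑ j, y j - ∑ j : Fin k, (j : ℕ)) =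
        (expCoeffMatrix 𝕂 y).det • ιMulti 𝕂 k (fun j => b j) := by
  set d := ∑ j, y j - ∑ j : Fin k, (j : ℕ)
  set G := Fintype.piFinset fun j => range (y j + 1)
  set x : (Fin k → ℕ) → ExteriorAlgebra 𝕂 M :=
    fun g => (∏ j, expCoeff 𝕂 (y j) (g j)) • ιMulti 𝕂 k (fun j => b (g j))
  have hdeg {g : Fin k → ℕ} (hg : x g ≠ 0) :
      ∑ j, (y j - g j) = ∑ j, y j - ∑ j, g j ∧ ∑ j, g j ≤ ∑ j, y j ∧
        ∑ j : Fin k, (j : ℕ) ≤ ∑ j, g j := by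
    obtain ⟨hle, hinj⟩ := le_and_injective_of_smul_ιMulti_ne_zero b y hg
    exact ⟨sum_tsub_distrib _ fun j _ => hle j, sum_le_sum fun j _ => hle j,
      sum_val_le_sum_of_injective hinj⟩
  refine ⟨fun m => ∑ g ∈ G with ∑ j, (y j - g j) = m, x g, fun t => ?_, ?_⟩
  · rw [ιMulti_sum_smul_eq_sum_piFinset]
    refine sum_pow_smul_eq_sum_range G _ x (fun g _ hlt => ?_) t
    by_contra hg
    have := hdeg hg
    omega
  have hperm (σ : Equiv.Perm (Fin k)) : x (fun j => σ j) =
      (Equiv.Perm.sign σ * ∏ j, expCoeffMatrix 𝕂 y (σ j) j) • ιMulti 𝕂 k (fun j => b j) := by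
    rw [mul_comm, ← smul_smul, Int.cast_smul_eq_zsmul, ← Units.smul_def,
      ← AlternatingMap.map_perm]
    rfl
  calc ∑ g ∈ G with ∑ j, (y j - g j) = d, x g
      = ∑ σ : Equiv.Perm (Fin k), x (fun j => σ j) := by
        -- the nonzero terms of top degree are exactly those indexed by permutations
        refine (sum_bij_ne_zero (fun σ _ _ j => (σ j : ℕ)) (fun σ _ hσ => ?_)
          (fun σ _ _ τ _ _ h => Equiv.ext fun j => Fin.ext (congrFun h j))
          (fun g hg hx => ?_) (fun _ _ _ => rfl)).symm
        · obtain ⟨hle, -⟩ := le_and_injective_of_smul_ιMulti_ne_zero b y hσ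
          have := (hdeg hσ).1
          rw [Equiv.sum_comp σ (fun j => (j : ℕ))] at this
          simpa [G, Nat.lt_succ_iff, hle] using this
        · obtain ⟨-, hinj⟩ := le_and_injective_of_smul_ιMulti_ne_zero b y hx
          have := hdeg hx
          have hd := (mem_filter.1 hg).2
          obtain ⟨σ, rfl⟩ := exists_perm_of_sum_le hinj (by omega)
          exact ⟨σ, mem_univ σ, hx, rfl⟩
    _ = (expCoeffMatrix 𝕂 y).det • ιMulti 𝕂 k (fun j => b j) := by
        simp only [hperm, ← sum_smul, Matrix.det_apply']

end Wedge

end ExpCoeff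

section Shift

variable {𝕂 : Type*} [Semiring 𝕂] {p : ℕ}

variable (𝕂 p) in
/-- The weight vector `v_{-p+2s} = e (p - s)`, and zero for `s > p`. -/
def revSingle (s : ℕ) : Fin (p + 1) → 𝕂 :=
  if h : s ≤ p then Pi.single ⟨p - s, by omega⟩ 1 else 0

theorem revSingle_of_le {s : ℕ} (h : s ≤ p) :
    revSingle 𝕂 p s = Pi.single ⟨p - s, by omega⟩ 1 :=
  dif_pos h

theorem revSingle_sub_val (i : Fin (p + 1)) : revSingle 𝕂 p (p - i) = Pi.single i 1 := by
  rw [revSingle_of_le (Nat.sub_le p i)]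
  exact congrArg (Pi.single · 1) (Fin.ext (Nat.sub_sub_self (Nat.lt_succ_iff.1 i.2)))

variable {f : Module.End 𝕂 (Fin (p + 1) → 𝕂)}
  (hf : ∀ i : Fin (p + 1), f (Pi.single i 1) =
    if h : (i : ℕ) + 1 < p + 1 then Pi.single (⟨(i : ℕ) + 1, h⟩ : Fin (p + 1)) 1 else 0)
include hf

theorem apply_revSingle_zero : f (revSingle 𝕂 p 0) = 0 := by
  simp [revSingle, hf]

theorem apply_revSingle_succ {s : ℕ} (hs : s < p) :
    f (revSingle 𝕂 p (s + 1)) = revSingle 𝕂 p s := by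
  rw [revSingle_of_le hs, revSingle_of_le hs.le, hf,
    dif_pos (show p - (s + 1) + 1 < p + 1 by omega)]
  exact congrArg (Pi.single · 1) (Fin.ext (by simp only; omega))

end Shift

/-- Let `V = 𝕂^{p+1}` be the simple `sl₂`-module of highest weight `p`, with
weight basis `v_{p-2i} = e i` (`i = 0, …, p`), on which `f` acts by `f (e i) = e (i+1)`,
`f (e p) = 0`.  Let `U` be the `h`-stable `k`-dimensional subspace spanned by the basis vectors
`e (idx 0), …, e (idx (k-1))`.  Then the limit as `t → ∞` of `exp(t f) U` in the Grassmannian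
exists and equals `⟨v_{-p}⟩ ⊕ ⟨v_{-p+2}⟩ ⊕ … ⊕ ⟨v_{-p+2k-2}⟩ = ⟨e p, e (p-1), …, e (p-k+1)⟩`.
This is expressed via Plücker coordinates: the curve
`t ↦ exp(t f) u₀ ∧ … ∧ exp(t f) u_{k-1}` in `Λᵏ V` is polynomial in `t`, and its leading
coefficient is a nonzero scalar multiple of `e p ∧ e (p-1) ∧ … ∧ e (p-k+1)`; hence the limit of
the corresponding lines in `ℙ(Λᵏ V)` as `t → ∞` is the line spanned by the latter vector. -/
theorem stmt2 (𝕂 : Type*) [Field 𝕂] [CharZero 𝕂]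
    (p k : ℕ) (hkp : k ≤ p + 1)
    (f : Module.End 𝕂 (Fin (p + 1) → 𝕂))
    (hf : ∀ i : Fin (p + 1), f (Pi.single i 1) =
      if h : (i : ℕ) + 1 < p + 1 then Pi.single (⟨(i : ℕ) + 1, h⟩ : Fin (p + 1)) 1 else 0)
    (expf : 𝕂 → Module.End 𝕂 (Fin (p + 1) → 𝕂))
    (hexp : ∀ t, expf t =
      ∑ m ∈ Finset.range (p + 1), (t ^ m / (Nat.factorial m : 𝕂)) • f ^ m)
    (idx : Fin k → Fin (p + 1)) (hidx : StrictMono idx)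
    (w : 𝕂 → ExteriorAlgebra 𝕂 (Fin (p + 1) → 𝕂))
    (hw : ∀ t, w t = ExteriorAlgebra.ιMulti 𝕂 k (fun j => expf t (Pi.single (idx j) 1))) :
    ∃ (d : ℕ) (a : ℕ → ExteriorAlgebra 𝕂 (Fin (p + 1) → 𝕂)) (c : 𝕂),
      (∀ t, w t = ∑ m ∈ Finset.range (d + 1), t ^ m • a m) ∧
      c ≠ 0 ∧
      a d = c • ExteriorAlgebra.ιMulti 𝕂 k
        (fun j : Fin k => Pi.single (⟨p - (j : ℕ), by omega⟩ : Fin (p + 1)) 1) := by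
  set y : Fin k → ℕ := fun j => p - idx j
  have hy : Injective y := fun i j h => hidx.injective <| Fin.ext <|
    (tsub_right_inj (Nat.lt_succ_iff.1 (idx i).2) (Nat.lt_succ_iff.1 (idx j).2)).1 h
  have hcurve (t : 𝕂) (j : Fin k) : expf t (Pi.single (idx j) 1) =
      ∑ s ∈ range (y j + 1), (t ^ (y j - s) * expCoeff 𝕂 (y j) s) • revSingle 𝕂 p s := by
    rw [hexp, ← revSingle_sub_val, LinearMap.coe_sum, Finset.sum_apply]
    exact sum_pow_div_factorial_smul_pow_apply_of_chain (by omega) (apply_revSingle_zero hf)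
      (fun s hs => apply_revSingle_succ hf (by omega)) t
  obtain ⟨a, ha, hlead⟩ := exists_ιMulti_sum_smul_eq_sum_range_pow_smul 𝕂 (revSingle 𝕂 p) y
  refine ⟨_, a, _, fun t => ?_, det_expCoeffMatrix_ne_zero hy, hlead.trans ?_⟩
  · rw [hw]
    simp_rw [hcurve]
    exact ha t
  · exact congrArg _ (congrArg _ (funext fun j => revSingle_of_le (by omega)))
end

section
/- Let G be connected reductive with standard Levi L, set of C-roots Φ (C the connected center of L), and let Ψ ⊆ Φ⁺ be a nonempty finite subset closed under the property of Lemma (sums): if λ ∈ Ψ and λ = μ + ν with μ, ν ∈ Φ⁺ then {μ,ν} ∩ Ψ ≠ ∅. Then there exists a simple root α ∈ Π \ Π_L whose restriction ᾱ to C lies in Ψ. -/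
/-!
Start from a positive root `δ` with `ε δ ∈ Ψ` and strip off simple roots: if `δ` is not simple,
write `δ = (δ - β) + β` with `β` simple and `δ - β` positive. Restricting to `C`, either one of
the two summands restricts to `0` and the other one carries `ε δ`, or both lie in `Φ⁺` and
sum-closedness puts one of them in `Ψ`. If it is `ε β`, we are done; otherwise we continue with
`δ - β`, which has smaller height.
-/

theorem Set.image_diff_setOf_eq_zero {α M : Type*} [Zero M] (f : α → M) (s : Set α) :
    f '' (s \ {x ∈ s | f x = 0}) = f '' s \ {0} := by
  ext y
  simp only [Set.mem_image, Set.mem_sdiff, Set.mem_ofPred_eq, Set.mem_singleton_iff]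
  constructor
  · rintro ⟨x, ⟨hx, hx0⟩, rfl⟩
    exact ⟨⟨x, hx, rfl⟩, fun h => hx0 ⟨hx, h⟩⟩
  · rintro ⟨⟨x, hx, rfl⟩, hy⟩
    exact ⟨x, ⟨hx, fun h => hy h.2⟩, rfl⟩

theorem mem_or_mem_of_add_mem_of_sumClosed {M : Type*} [AddCommMonoid M] {Φ Ψ : Set M}
    (hsum : ∀ lam ∈ Ψ, ∀ μ ∈ Φ, ∀ ν ∈ Φ, lam = μ + ν → μ ∈ Ψ ∨ ν ∈ Ψ)
    {μ ν : M} (hμ : μ ∈ insert 0 Φ) (hν : ν ∈ insert 0 Φ) (h : μ + ν ∈ Ψ) :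
    μ ∈ Ψ ∨ ν ∈ Ψ := by
  rcases hμ with rfl | hμ
  · exact Or.inr (by simpa using h)
  rcases hν with rfl | hν
  · exact Or.inl (by simpa using h)
  exact hsum _ h μ hμ ν hν rfl

theorem exists_simple_restrict_mem {XT XC : Type*} [AddCommGroup XT] [AddCommGroup XC]
    (ε : XT →+ XC) {Δpos : Set XT} {SR : Finset XT} (hSR : ↑SR ⊆ Δpos) (ht : XT → ℕ)
    (hht : ∀ δ ∈ Δpos, ∀ β ∈ SR, δ - β ∈ Δpos → ht (δ - β) < ht δ)
    (haux : ∀ δ ∈ Δpos, δ ∉ (SR : Set XT) → ∃ β ∈ SR, δ - β ∈ Δpos)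
    {Ψ : Set XC}
    (hsum : ∀ lam ∈ Ψ, ∀ μ ∈ ε '' Δpos \ {0}, ∀ ν ∈ ε '' Δpos \ {0},
      lam = μ + ν → μ ∈ Ψ ∨ ν ∈ Ψ)
    {δ : XT} (hδ : δ ∈ Δpos) (hδΨ : ε δ ∈ Ψ) :
    ∃ α ∈ SR, ε α ∈ Ψ := by
  have hroot : ∀ γ ∈ Δpos, ε γ ∈ insert 0 (ε '' Δpos \ {0}) := fun γ hγ => by
    rw [Set.insert_sdiff_singleton]
    exact Set.mem_insert_of_mem _ ⟨γ, hγ, rfl⟩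
  induction h : ht δ using Nat.strong_induction_on generalizing δ with
  | _ n ih =>
    by_cases hs : δ ∈ (SR : Set XT)
    · exact ⟨δ, hs, hδΨ⟩
    obtain ⟨β, hβ, hδβ⟩ := haux δ hδ hs
    have hsplit : ε (δ - β) + ε β ∈ Ψ := by rwa [← map_add, sub_add_cancel]
    rcases mem_or_mem_of_add_mem_of_sumClosed hsum (hroot _ hδβ) (hroot _ (hSR hβ)) hsplit
      with hδβΨ | hβΨ
    · exact ih _ (h ▸ hht δ hδ β hβ hδβ) hδβ hδβΨ rfl
    · exact ⟨β, hβ, hβΨ⟩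

theorem stmt8_general {XT XC : Type*} [AddCommGroup XT] [AddCommGroup XC]
    (ε : XT →+ XC)
    (Δpos : Set XT) (SR : Finset XT) (hSR : ↑SR ⊆ Δpos)
    (ht : XT → ℕ)                                          -- the height function
    (hht : ∀ δ ∈ Δpos, ∀ β ∈ SR, δ - β ∈ Δpos → ht (δ - β) + 1 = ht δ)
    -- every non-simple positive root admits subtraction of a simple root
    (haux : ∀ δ ∈ Δpos, δ ∉ (SR : Set XT) → ∃ β ∈ SR, δ - β ∈ Δpos)
    (ΔLpos : Set XT) (hΔL : ΔLpos = {δ ∈ Δpos | ε δ = 0})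
    (Φpos : Set XC) (hΦ : Φpos = ε '' (Δpos \ ΔLpos))
    (Ψ : Set XC) (hΨne : Ψ.Nonempty) (hΨΦ : Ψ ⊆ Φpos)
    (hsum : ∀ lam ∈ Ψ, ∀ μ ∈ Φpos, ∀ ν ∈ Φpos, lam = μ + ν → μ ∈ Ψ ∨ ν ∈ Ψ) :
    ∃ α ∈ SR, ε α ≠ 0 ∧ ε α ∈ Ψ := by
  subst hΔL hΦ
  rw [Set.image_diff_setOf_eq_zero] at hΨΦ hsum
  obtain ⟨_, hlam⟩ := hΨne
  obtain ⟨⟨δ, hδ, rfl⟩, -⟩ := hΨΦ hlam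
  have hht_lt : ∀ δ ∈ Δpos, ∀ β ∈ SR, δ - β ∈ Δpos → ht (δ - β) < ht δ :=
    fun δ hδ β hβ hδβ => by have := hht δ hδ β hβ hδβ; omega
  obtain ⟨α, hα, hαΨ⟩ := exists_simple_restrict_mem ε hSR ht hht_lt haux hsum hδ hlam
  exact ⟨α, hα, (hΨΦ hαΨ).2, hαΨ⟩

/-- Combinatorial setting: `Δ⁺ ⊆ 𝔛(T)` the positive roots, `SR` the simple
roots, `ε : 𝔛(T) → 𝔛(C)` the restriction to the connected center of a standard Levi `L`,
`Δ⁺_L = {δ ∈ Δ⁺ : ε δ = 0}`, `Φ⁺ = ε (Δ⁺ \ Δ⁺_L)` the positive `C`-roots.  Let `Ψ ⊆ Φ⁺` be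
a nonempty subset which is sum-closed in the sense of the Lemma: if `λ ∈ Ψ` and `λ = μ + ν`
with `μ, ν ∈ Φ⁺` then `{μ, ν} ∩ Ψ ≠ ∅`.  Then there exists a simple root
`α ∈ Π \ Π_L` (i.e. `ε α ≠ 0`) whose restriction `ᾱ = ε α` lies in `Ψ`. -/
theorem stmt8 {XT XC : Type*} [AddCommGroup XT] [AddCommGroup XC]
    (ε : XT →+ XC)
    (Δpos : Set XT) (SR : Finset XT) (hSR : ↑SR ⊆ Δpos)
    (ht : XT → ℕ)                                          -- the height function
    (hht1 : ∀ β ∈ SR, ht β = 1)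
    (hht : ∀ δ ∈ Δpos, ∀ β ∈ SR, δ - β ∈ Δpos → ht (δ - β) + 1 = ht δ)
    (hhtpos : ∀ δ ∈ Δpos, 0 < ht δ)
    -- every non-simple positive root admits subtraction of a simple root
    (haux : ∀ δ ∈ Δpos, δ ∉ (SR : Set XT) → ∃ β ∈ SR, δ - β ∈ Δpos)
    (ΔLpos : Set XT) (hΔL : ΔLpos = {δ ∈ Δpos | ε δ = 0})
    (Φpos : Set XC) (hΦ : Φpos = ε '' (Δpos \ ΔLpos))
    (Ψ : Set XC) (hΨne : Ψ.Nonempty) (hΨΦ : Ψ ⊆ Φpos)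
    (hsum : ∀ lam ∈ Ψ, ∀ μ ∈ Φpos, ∀ ν ∈ Φpos, lam = μ + ν → μ ∈ Ψ ∨ ν ∈ Ψ) :
    ∃ α ∈ SR, ε α ≠ 0 ∧ ε α ∈ Ψ :=
  stmt8_general ε Δpos SR hSR ht hht haux ΔLpos hΔL Φpos hΦ Ψ hΨne hΨΦ hsum
end

section
/- The GL_n(𝕂)-module V = 𝕂ⁿ ⊕ Λ²𝕂ⁿ (standard representation plus its second exterior power, with GL_n acting diagonally) is a spherical module: a Borel subgroup of GL_n(𝕂) has a dense orbit on V. Equivalently, the coordinate ring 𝕂[V] is multiplicity-free as a GL_n-module. -/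
/-!
Take `x = eₙ` and `A = ∑ eᵢ ∧ eᵢ₊₁`. Write a pair `(u, M)` of size `m + 1` as `u = (v, η)` and
`M = [[M₀, c], [-cᵀ, 0]]`. An upper triangular `g` with last column `(v, η)` maps `x` to `u`, and
it maps `A` to `M` exactly when its upper left block `g'` maps `(x, A)` of size `m` to
`η⁻¹ • (c, η M₀ + v cᵀ - c vᵀ)`. Iterating, `(u, M)` lies in the Borel orbit as soon as all the
successive pivots `η` are nonzero; their product is a polynomial in `(u, M)` which equals `1` at
`(x, A)`. So on the line through `(x, A)` and any antisymmetric `(y, C)`, a polynomial vanishing on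
the orbit vanishes at all but finitely many points, hence everywhere.
-/

open Matrix MvPolynomial

namespace Matrix

variable {R : Type*} {m : ℕ}

def bordered (M : Matrix (Fin m) (Fin m) R) (c r : Fin m → R) (d : R) :
    Matrix (Fin (m + 1)) (Fin (m + 1)) R :=
  of (Fin.snoc (fun i => Fin.snoc (M i) (c i)) (Fin.snoc r d))

lemma eq_bordered (B : Matrix (Fin (m + 1)) (Fin (m + 1)) R) :
    B = bordered (B.submatrix Fin.castSucc Fin.castSucc) (fun i => B i.castSucc (Fin.last m))
      (fun j => B (Fin.last m) j.castSucc) (B (Fin.last m) (Fin.last m)) := by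
  ext i j
  induction i using Fin.lastCases <;> induction j using Fin.lastCases <;> simp [bordered]

lemma bordered_inj {M M' : Matrix (Fin m) (Fin m) R} {c c' r r' : Fin m → R} {d d' : R} :
    bordered M c r d = bordered M' c' r' d' ↔ M = M' ∧ c = c' ∧ r = r' ∧ d = d' := by
  refine ⟨fun h => ⟨?_, ?_, ?_, ?_⟩, by rintro ⟨rfl, rfl, rfl, rfl⟩; rfl⟩
  · ext i j; simpa [bordered] using congr_fun₂ h i.castSucc j.castSucc
  · ext i; simpa [bordered] using congr_fun₂ h i.castSucc (Fin.last m)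
  · ext j; simpa [bordered] using congr_fun₂ h (Fin.last m) j.castSucc
  · simpa [bordered] using congr_fun₂ h (Fin.last m) (Fin.last m)

variable (M : Matrix (Fin m) (Fin m) R) (c r : Fin m → R) (d : R)

@[simp] lemma bordered_castSucc_castSucc (i j : Fin m) :
    bordered M c r d i.castSucc j.castSucc = M i j := by simp [bordered]

@[simp] lemma bordered_castSucc_last (i : Fin m) :
    bordered M c r d i.castSucc (Fin.last m) = c i := by simp [bordered]

@[simp] lemma bordered_last_castSucc (j : Fin m) :
    bordered M c r d (Fin.last m) j.castSucc = r j := by simp [bordered]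

@[simp] lemma bordered_last_last : bordered M c r d (Fin.last m) (Fin.last m) = d := by
  simp [bordered]

@[simp] lemma bordered_submatrix_castSucc :
    (bordered M c r d).submatrix Fin.castSucc Fin.castSucc = M := by
  ext i j; simp

lemma transpose_bordered : (bordered M c r d)ᵀ = bordered Mᵀ r c d := by
  ext i j
  induction i using Fin.lastCases <;> induction j using Fin.lastCases <;> simp

lemma neg_bordered [Neg R] : -bordered M c r d = bordered (-M) (-c) (-r) (-d) := by
  ext i j
  induction i using Fin.lastCases <;> induction j using Fin.lastCases <;> simp

lemma bordered_mul_bordered [CommSemiring R] (M' : Matrix (Fin m) (Fin m) R) (c' r' : Fin m → R)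
    (d' : R) :
    bordered M c r d * bordered M' c' r' d' =
      bordered (M * M' + vecMulVec c r') (M *ᵥ c' + d' • c) (r ᵥ* M' + d • r')
        (r ⬝ᵥ c' + d * d') := by
  ext i j
  induction i using Fin.lastCases <;> induction j using Fin.lastCases <;>
    simp [mul_apply, Fin.sum_univ_castSucc, mulVec, vecMul, dotProduct, vecMulVec_apply, mul_comm]

lemma bordered_mulVec_snoc [CommSemiring R] (v : Fin m → R) (s : R) :
    bordered M c r d *ᵥ Fin.snoc v s = Fin.snoc (M *ᵥ v + s • c) (r ⬝ᵥ v + d * s) := by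
  ext i
  induction i using Fin.lastCases <;> simp [mulVec, dotProduct, Fin.sum_univ_castSucc, mul_comm]

lemma det_bordered_zero [CommRing R] : (bordered M c 0 d).det = M.det * d := by
  rw [det_succ_row _ (Fin.last m), Fin.sum_univ_castSucc]
  simp [Fin.succAbove_last, submatrix]
  exact mul_comm _ _

variable {M} in
lemma blockTriangular_bordered_zero [Zero R] (hM : M.BlockTriangular id) :
    (bordered M c 0 d).BlockTriangular id := by
  intro i j hij
  induction i using Fin.lastCases with
  | last => induction j using Fin.lastCases <;> simp_all
  | cast i =>
    induction j using Fin.lastCases with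
    | last => exact absurd hij (Fin.castSucc_lt_last i).not_gt
    | cast j => simpa using hM (by simpa using hij)

end Matrix

lemma Matrix.diag_eq_zero_of_transpose_eq_neg {R n : Type*} [CommRing R] [NoZeroDivisors R]
    [NeZero (2 : R)] {M : Matrix n n R} (hM : Mᵀ = -M) (i : n) : M i i = 0 := by
  have h := congr_fun₂ hM i i
  simp only [transpose_apply, Matrix.neg_apply] at h
  exact (mul_eq_zero.mp (by linear_combination h : (2 : R) * M i i = 0)).resolve_left two_ne_zero

lemma Matrix.exists_bordered_of_transpose_eq_neg {R : Type*} [CommRing R] [NoZeroDivisors R]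
    [NeZero (2 : R)] {m : ℕ} {M : Matrix (Fin (m + 1)) (Fin (m + 1)) R} (hM : Mᵀ = -M) :
    ∃ (M₀ : Matrix (Fin m) (Fin m) R) (c : Fin m → R),
      M₀ᵀ = -M₀ ∧ M = bordered M₀ c (-c) 0 := by
  have hd := diag_eq_zero_of_transpose_eq_neg hM (Fin.last m)
  rw [eq_bordered M, transpose_bordered, neg_bordered, bordered_inj] at hM
  obtain ⟨h₀, hc, -, -⟩ := hM
  refine ⟨_, fun i => M i.castSucc (Fin.last m), h₀, ?_⟩
  conv_lhs => rw [eq_bordered M]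
  rw [hc, hd]

section Pivot

variable {R S : Type*} {m : ℕ}

def pivotColumn (M : Matrix (Fin (m + 1)) (Fin (m + 1)) R) : Fin m → R :=
  fun i => M i.castSucc (Fin.last m)

@[simp] lemma pivotColumn_bordered (M : Matrix (Fin m) (Fin m) R) (c r : Fin m → R) (d : R) :
    pivotColumn (bordered M c r d) = c := by
  ext i; simp [pivotColumn]

variable [CommRing R] [CommRing S]

def basePoint : (m : ℕ) → Fin m → R
  | 0 => 0
  | _ + 1 => Fin.snoc 0 1

def baseMatrix : (m : ℕ) → Matrix (Fin m) (Fin m) R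
  | 0 => 0
  | m + 1 => bordered (baseMatrix m) (basePoint m) (-basePoint m) 0

lemma transpose_baseMatrix : ∀ m, (baseMatrix m : Matrix (Fin m) (Fin m) R)ᵀ = -baseMatrix m
  | 0 => Subsingleton.elim _ _
  | m + 1 => by simp [baseMatrix, transpose_bordered, neg_bordered, transpose_baseMatrix m]

/-- The next target, multiplied by the pivot `u (Fin.last m)` so that `pivotProduct` stays a
polynomial. -/
def pivotReduce (u : Fin (m + 1) → R) (M : Matrix (Fin (m + 1)) (Fin (m + 1)) R) :
    Matrix (Fin m) (Fin m) R :=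
  u (Fin.last m) • M.submatrix Fin.castSucc Fin.castSucc
    + vecMulVec (Fin.init u) (pivotColumn M) - vecMulVec (pivotColumn M) (Fin.init u)

def pivotProduct : {m : ℕ} → (Fin m → R) → Matrix (Fin m) (Fin m) R → R
  | 0, _, _ => 1
  | _ + 1, u, M => u (Fin.last _) * pivotProduct (pivotColumn M) (pivotReduce u M)

@[simp] lemma pivotReduce_snoc_bordered (v : Fin m → R) (η : R)
    (M : Matrix (Fin m) (Fin m) R) (c r : Fin m → R) (d : R) :
    pivotReduce (Fin.snoc v η) (bordered M c r d) = η • M + vecMulVec v c - vecMulVec c v := by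
  simp [pivotReduce]

lemma pivotColumn_smul (β : R) (M : Matrix (Fin (m + 1)) (Fin (m + 1)) R) :
    pivotColumn (β • M) = β • pivotColumn M := rfl

lemma pivotReduce_smul (α β : R) (u : Fin (m + 1) → R)
    (M : Matrix (Fin (m + 1)) (Fin (m + 1)) R) :
    pivotReduce (α • u) (β • M) = (α * β) • pivotReduce u M := by
  ext i j
  simp [pivotReduce, pivotColumn, vecMulVec_apply, Fin.init]
  ring

lemma pivotColumn_map (f : R →+* S) (M : Matrix (Fin (m + 1)) (Fin (m + 1)) R) :
    pivotColumn (M.map f) = f ∘ pivotColumn M := rfl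

lemma pivotReduce_map (f : R →+* S) (u : Fin (m + 1) → R)
    (M : Matrix (Fin (m + 1)) (Fin (m + 1)) R) :
    pivotReduce (f ∘ u) (M.map f) = (pivotReduce u M).map f := by
  ext i j
  simp [pivotReduce, pivotColumn, vecMulVec_apply, Fin.init]

lemma map_pivotProduct (f : R →+* S) (u : Fin m → R) (M : Matrix (Fin m) (Fin m) R) :
    f (pivotProduct u M) = pivotProduct (f ∘ u) (M.map f) := by
  induction m with
  | zero => simp [pivotProduct]
  | succ m ih => simp [pivotProduct, ih, pivotColumn_map, pivotReduce_map]

lemma pivotProduct_smul (u : Fin m → R) (M : Matrix (Fin m) (Fin m) R) (α β : R) :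
    ∃ k l : ℕ, pivotProduct (α • u) (β • M) = α ^ k * β ^ l * pivotProduct u M := by
  induction m generalizing α β with
  | zero => exact ⟨0, 0, by simp [pivotProduct]⟩
  | succ m ih =>
    obtain ⟨k, l, h⟩ := ih (pivotColumn M) (pivotReduce u M) β (α * β)
    refine ⟨l + 1, k + l, ?_⟩
    simp only [pivotProduct, pivotColumn_smul, pivotReduce_smul, h, Pi.smul_apply, smul_eq_mul]
    ring

lemma pivotProduct_basePoint_baseMatrix :
    ∀ m, pivotProduct (basePoint m) (baseMatrix m : Matrix (Fin m) (Fin m) R) = 1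
  | 0 => rfl
  | m + 1 => by
    simp [basePoint.eq_2, baseMatrix.eq_2, pivotProduct, pivotProduct_basePoint_baseMatrix m]

end Pivot

theorem exists_upperTriangular_of_pivotProduct_ne_zero {K : Type*} [Field K] [NeZero (2 : K)]
    {m : ℕ} {u : Fin m → K} {M : Matrix (Fin m) (Fin m) K} (hM : Mᵀ = -M)
    (hu : pivotProduct u M ≠ 0) :
    ∃ g : Matrix (Fin m) (Fin m) K, g.BlockTriangular id ∧ IsUnit g.det ∧
      g *ᵥ basePoint m = u ∧ g * baseMatrix m * gᵀ = M := by
  induction m with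
  | zero => exact ⟨1, fun i => i.elim0, by simp, Subsingleton.elim _ _, Subsingleton.elim _ _⟩
  | succ m ih =>
    obtain ⟨M₀, c, hM₀, rfl⟩ := exists_bordered_of_transpose_eq_neg hM
    obtain ⟨v, η, rfl⟩ : ∃ v η, u = Fin.snoc v η :=
      ⟨Fin.init u, u (Fin.last m), (Fin.snoc_init_self u).symm⟩
    set N := η • M₀ + vecMulVec v c - vecMulVec c v
    have hN : Nᵀ = -N := by
      simp [N, transpose_vecMulVec, hM₀]
      abel
    simp only [pivotProduct, pivotColumn_bordered, pivotReduce_snoc_bordered, Fin.snoc_last] at hu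
    obtain ⟨hη, hN₀⟩ := mul_ne_zero_iff.mp hu
    obtain ⟨k, l, hkl⟩ := pivotProduct_smul c N η⁻¹ η⁻¹
    obtain ⟨g, hg, hdet, hgx, hgA⟩ := ih (u := η⁻¹ • c) (M := η⁻¹ • N)
      (by rw [transpose_smul, hN, smul_neg])
      (by rw [hkl]; exact mul_ne_zero (by simp [hη]) hN₀)
    refine ⟨bordered g v 0 η, blockTriangular_bordered_zero v η hg,
      by rw [det_bordered_zero]; exact hdet.mul hη.isUnit, ?_, ?_⟩
    · simp [basePoint, bordered_mulVec_snoc]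
    · simp only [baseMatrix, transpose_bordered, bordered_mul_bordered, bordered_inj]
      refine ⟨?_, ?_, ?_, ?_⟩ <;>
        simp [add_mul, vecMulVec_mul, vecMul_transpose, mulVec_neg, mulVec_smul, hgx, hgA, N,
          smul_add, smul_sub, smul_smul, hη, vecMulVec_neg, vecMulVec_smul, smul_vecMulVec]
      abel

open scoped Polynomial in
theorem MvPolynomial.eval_polynomial_eval_eq_zero_of_ne_zero {K σ : Type*} [Field K]
    [Infinite K] (P : MvPolynomial σ K) (f : σ → K[X]) {D : K[X]} (hD : D ≠ 0)
    (h : ∀ t, D.eval t ≠ 0 → eval (fun s => (f s).eval t) P = 0) (t : K) :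
    eval (fun s => (f s).eval t) P = 0 := by
  have hQ (t : K) : (aeval f P).eval t = eval (fun s => (f s).eval t) P := by
    have hC : (Polynomial.evalRingHom t).comp Polynomial.C = RingHom.id K := by ext; simp
    rw [aeval_def, polynomial_eval_eval₂, Polynomial.algebraMap_eq, hC]
    rfl
  have hDQ : D * aeval f P = 0 := Polynomial.funext fun t => by
    by_cases ht : D.eval t = 0
    · simp [ht]
    · simp [hQ, h t ht]
  rw [← hQ, (mul_eq_zero.mp hDQ).resolve_left hD, Polynomial.eval_zero]

theorem stmt12_general (𝕂 : Type*) [Field 𝕂] [CharZero 𝕂] (n : ℕ) :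
    ∃ (x : Fin n → 𝕂) (A : Matrix (Fin n) (Fin n) 𝕂), Aᵀ = -A ∧
      ∀ P : MvPolynomial (Fin n ⊕ Fin n × Fin n) 𝕂,
        (∀ g : Matrix (Fin n) (Fin n) 𝕂, IsUnit g.det →
          (∀ i j : Fin n, j < i → g i j = 0) →
          MvPolynomial.eval
            (Sum.elim (g.mulVec x) (fun q => (g * A * gᵀ) q.1 q.2)) P = 0) →
        ∀ (y : Fin n → 𝕂) (C : Matrix (Fin n) (Fin n) 𝕂), Cᵀ = -C →
          MvPolynomial.eval (Sum.elim y (fun q => C q.1 q.2)) P = 0 := by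
  refine ⟨basePoint n, baseMatrix n, transpose_baseMatrix n, fun P hP y C hC => ?_⟩
  let yₜ (t : 𝕂) : Fin n → 𝕂 := y + t • (basePoint n - y)
  let Cₜ (t : 𝕂) : Matrix (Fin n) (Fin n) 𝕂 := C + t • (baseMatrix n - C)
  let u : Fin n → Polynomial 𝕂 := fun i => .C (y i) + .X * .C (basePoint n i - y i)
  let M : Matrix (Fin n) (Fin n) (Polynomial 𝕂) :=
    of fun i j => .C (C i j) + .X * .C (baseMatrix n i j - C i j)
  have hu (t : 𝕂) : Polynomial.evalRingHom t ∘ u = yₜ t := by ext i; simp [u, yₜ]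
  have hM (t : 𝕂) : M.map (Polynomial.evalRingHom t) = Cₜ t := by ext i j; simp [M, Cₜ]
  have hline (t : 𝕂) : (fun s => (Sum.elim u (fun q : Fin n × Fin n => M q.1 q.2) s).eval t) =
      Sum.elim (yₜ t) (fun q : Fin n × Fin n => Cₜ t q.1 q.2) := by
    rw [← hu, ← hM]; ext (i | q) <;> rfl
  have hD : pivotProduct u M ≠ 0 := fun h => by
    have h1 := congrArg (Polynomial.evalRingHom 1) h
    rw [map_pivotProduct, hu, hM, map_zero] at h1
    simp [yₜ, Cₜ, pivotProduct_basePoint_baseMatrix] at h1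
  have hvanish (t : 𝕂) (ht : (pivotProduct u M).eval t ≠ 0) :
      eval (fun s => (Sum.elim u (fun q : Fin n × Fin n => M q.1 q.2) s).eval t) P = 0 := by
    rw [← Polynomial.coe_evalRingHom, map_pivotProduct, hu, hM] at ht
    obtain ⟨g, hg, hdet, hgx, hgA⟩ := exists_upperTriangular_of_pivotProduct_ne_zero
      (by rw [transpose_add, transpose_smul, transpose_sub, transpose_baseMatrix, hC]; module) ht
    rw [hline, ← hgx, ← hgA]
    exact hP g hdet hg
  simpa [hline, yₜ, Cₜ] using
    MvPolynomial.eval_polynomial_eval_eq_zero_of_ne_zero P _ hD hvanish 0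

/-- The `GL_n(𝕂)`-module `V = 𝕂ⁿ ⊕ Λ²𝕂ⁿ` (standard representation plus its
second exterior power, realized as antisymmetric `n × n` matrices with action `A ↦ g A gᵀ`)
is spherical: the Borel subgroup of upper triangular invertible matrices has a dense orbit on
`V`.  Density of the orbit of `(x, A)` in the Zariski topology is expressed as: every
polynomial function vanishing on the orbit vanishes on the whole variety
`{(y, C) : Cᵀ = -C}`. -/
theorem stmt12 (𝕂 : Type*) [Field 𝕂] [CharZero 𝕂] [IsAlgClosed 𝕂] (n : ℕ) :
    ∃ (x : Fin n → 𝕂) (A : Matrix (Fin n) (Fin n) 𝕂), Aᵀ = -A ∧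
      ∀ P : MvPolynomial (Fin n ⊕ Fin n × Fin n) 𝕂,
        (∀ g : Matrix (Fin n) (Fin n) 𝕂, IsUnit g.det →
          (∀ i j : Fin n, j < i → g i j = 0) →
          MvPolynomial.eval
            (Sum.elim (g.mulVec x) (fun q => (g * A * gᵀ) q.1 q.2)) P = 0) →
        ∀ (y : Fin n → 𝕂) (C : Matrix (Fin n) (Fin n) 𝕂), Cᵀ = -C →
          MvPolynomial.eval (Sum.elim y (fun q => C q.1 q.2)) P = 0 :=
  stmt12_general 𝕂 n
end
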